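/- arXiv:2301.06099 — 5 statements merged into one kernel-verified Lean document; each statement's English description precedes it below -/
import Mathlib

section
/- For every (μ, σ) ∈ ℝ × (0, ∞), f((y - μ)/σ)/σ is asymptotically equivalent to f(y) as y → +∞, i.e. the ratio (f((y-μ)/σ)/σ)/f(y) tends to 1. -/
/-!
Up to the constant `γ / 2`, `f z = (1 + |z|)⁻¹ * (1 + log (1 + |z|))^(-(1 + γ))`. For large `y`, the
rescaled argument `t = (y - μ) / σ` satisfies `(1 + y) / (1 + t) → σ`, so the first factor of the
ratio tends to `σ`, which the division by `σ` cancels. Taking logarithms, `log (1 + y) - log (1 + t)`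
tends to `log σ`, a bounded shift that is negligible against `log (1 + t) → ∞`; hence the ratio of
the logarithmic factors tends to `1`.
-/

open Filter Real Topology

section

variable {α : Type*} {l : Filter α}

theorem tendsto_div_of_tendsto_sub_of_tendsto_atTop {u v : α → ℝ} {L : ℝ}
    (hv : Tendsto v l atTop) (huv : Tendsto (fun x => u x - v x) l (𝓝 L)) :
    Tendsto (fun x => u x / v x) l (𝓝 1) := by
  have h : Tendsto (fun x => 1 + (u x - v x) / v x) l (𝓝 (1 + 0)) :=
    tendsto_const_nhds.add (huv.div_atTop hv)
  rw [add_zero] at h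
  refine h.congr' ?_
  filter_upwards [hv.eventually_ne_atTop 0] with x hx
  field_simp
  ring

theorem tendsto_one_add_log_div_one_add_log {u v : α → ℝ} {c : ℝ} (hc : 0 < c)
    (hv : Tendsto v l atTop) (huv : Tendsto (fun x => u x / v x) l (𝓝 c)) :
    Tendsto (fun x => (1 + log (u x)) / (1 + log (v x))) l (𝓝 1) := by
  refine tendsto_div_of_tendsto_sub_of_tendsto_atTop (L := log c)
    (tendsto_atTop_add_const_left _ 1 (tendsto_log_atTop.comp hv)) ?_
  refine ((continuousAt_log hc.ne').tendsto.comp huv).congr' ?_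
  filter_upwards [hv.eventually_gt_atTop 0, huv.eventually (eventually_gt_nhds hc)]
    with x hvx huvx
  rw [Function.comp_apply, log_div (div_ne_zero_iff.mp huvx.ne').1 hvx.ne']
  ring

end

theorem tendsto_add_div_add_atTop (c d : ℝ) :
    Tendsto (fun y : ℝ => (y + c) / (y + d)) atTop (𝓝 1) :=
  tendsto_div_of_tendsto_sub_of_tendsto_atTop (L := c - d)
    (tendsto_atTop_add_const_right _ d tendsto_id)
    (tendsto_const_nhds.congr fun y => by ring)

theorem tendsto_one_add_div_one_add_sub_div {μ σ : ℝ} (hσ : σ ≠ 0) :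
    Tendsto (fun y : ℝ => (1 + y) / (1 + (y - μ) / σ)) atTop (𝓝 σ) := by
  have h := (tendsto_add_div_add_atTop 1 (σ - μ)).const_mul σ
  rw [mul_one] at h
  refine h.congr fun y => ?_
  rw [one_add_div hσ, div_div_eq_mul_div]
  ring_nf

theorem logPareto_ratio_eq {γ σ z w : ℝ} (hγ : γ ≠ 0) (hz : 0 ≤ z) (hw : 0 ≤ w) :
    γ / 2 * (1 / (1 + |w|)) * (1 / (1 + log (1 + |w|)) ^ (1 + γ)) / σ /
        (γ / 2 * (1 / (1 + |z|)) * (1 / (1 + log (1 + |z|)) ^ (1 + γ))) =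
      (1 + z) / (1 + w) / σ * ((1 + log (1 + z)) / (1 + log (1 + w))) ^ (1 + γ) := by
  have hlog_pos {x : ℝ} (hx : 0 ≤ x) : 0 < 1 + log (1 + x) := by
    have := log_nonneg (by linarith : (1 : ℝ) ≤ 1 + x); linarith
  have hLz := hlog_pos hz
  have hLw := hlog_pos hw
  rw [abs_of_nonneg hz, abs_of_nonneg hw, div_rpow hLz.le hLw.le]
  field_simp

theorem ratio_tendsto_one (γ : ℝ) (hγ : 0 < γ) (f : ℝ → ℝ)
    (hf : ∀ z : ℝ, f z = (γ / 2) * (1 / (1 + |z|)) * (1 / (1 + Real.log (1 + |z|)) ^ (1 + γ)))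
    (μ σ : ℝ) (hσ : 0 < σ) :
    Filter.Tendsto (fun y : ℝ => (f ((y - μ) / σ) / σ) / f y) Filter.atTop (nhds 1) := by
  have hb : Tendsto (fun y : ℝ => 1 + (y - μ) / σ) atTop atTop :=
    tendsto_atTop_add_const_left _ 1
      ((tendsto_atTop_add_const_right _ (-μ) tendsto_id).atTop_div_const hσ)
  have hab := tendsto_one_add_div_one_add_sub_div (μ := μ) hσ.ne'
  have hlog := tendsto_one_add_log_div_one_add_log hσ hb hab
  have hlim : Tendsto (fun y => (1 + y) / (1 + (y - μ) / σ) / σ *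
      ((1 + log (1 + y)) / (1 + log (1 + (y - μ) / σ))) ^ (1 + γ)) atTop (𝓝 1) := by
    simpa [hσ.ne'] using (hab.div_const σ).mul (hlog.rpow_const (Or.inr (by positivity)))
  refine hlim.congr' ?_
  filter_upwards [eventually_ge_atTop (max 0 μ)] with y hy
  rw [hf, hf]
  exact (logPareto_ratio_eq hγ.ne' (le_of_max_le_left hy)
    (div_nonneg (sub_nonneg.mpr (le_of_max_le_right hy)) hσ.le)).symm
end

section
/- Let (μ, σ) ∈ ℝ × (0, ∞) and y ∈ ℝ. If |y - μ| ≥ |y|/2 and |y| ≥ 1, then (f((y - μ)/σ)/σ)/f(y) ≤ 4 (1 + log 3)^{1+γ} (1 + log(1 + σ))^{1+γ}. -/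
theorem ratio_bound (γ : ℝ) (hγ : 0 < γ) (f : ℝ → ℝ)
    (hf : ∀ z : ℝ, f z = (γ / 2) * (1 / (1 + |z|)) * (1 / (1 + Real.log (1 + |z|)) ^ (1 + γ)))
    (μ σ y : ℝ) (hσ : 0 < σ) (h1 : |y| / 2 ≤ |y - μ|) (h2 : 1 ≤ |y|) :
    (f ((y - μ) / σ) / σ) / f y
      ≤ 4 * (1 + Real.log 3) ^ (1 + γ) * (1 + Real.log (1 + σ)) ^ (1 + γ) := by
  set a := |y| with ha_def
  set b := |(y - μ) / σ| with hb_def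
  have hb0 : 0 ≤ b := abs_nonneg _
  have ha1 : (1:ℝ) ≤ a := h2
  have hab : a ≤ 2 * σ * b := by
    have : a / 2 / σ ≤ b := by
      rw [hb_def, abs_div, abs_of_pos hσ]
      exact div_le_div_of_nonneg_right h1 hσ.le
    calc a = (a / 2 / σ) * (2 * σ) := by field_simp
    _ ≤ b * (2 * σ) := by
        apply mul_le_mul_of_nonneg_right this (by positivity)
    _ = 2 * σ * b := by ring
  -- log facts
  have hLz0 : 0 ≤ Real.log (1 + b) := Real.log_nonneg (by linarith)
  have hLy0 : 0 ≤ Real.log (1 + a) := Real.log_nonneg (by linarith)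
  have hLσ0 : 0 ≤ Real.log (1 + σ) := Real.log_nonneg (by linarith)
  have hL30 : 0 ≤ Real.log 3 := Real.log_nonneg (by norm_num)
  set Ly := Real.log (1 + a) with hLy_def
  set Lz := Real.log (1 + b) with hLz_def
  have hexp : 0 ≤ 1 + γ := by linarith
  -- key inequality A : 1 + a ≤ 4 * (σ * (1 + b))
  have hA : 1 + a ≤ 4 * (σ * (1 + b)) := by nlinarith
  -- key inequality B
  have hB : 1 + Ly ≤ ((1 + Real.log 3) * (1 + Real.log (1 + σ))) * (1 + Lz) := by
    have h3 : 1 + a ≤ 3 * (1 + σ) * (1 + b) := by nlinarith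
    have hlog : Ly ≤ Real.log 3 + Real.log (1 + σ) + Real.log (1 + b) := by
      rw [hLy_def]
      calc Real.log (1 + a) ≤ Real.log (3 * (1 + σ) * (1 + b)) :=
            Real.log_le_log (by linarith) h3
      _ = Real.log 3 + Real.log (1 + σ) + Real.log (1 + b) := by
            rw [Real.log_mul (by positivity) (by positivity),
              Real.log_mul (by norm_num) (by positivity)]
    nlinarith [mul_nonneg hL30 hLσ0, mul_nonneg hL30 hLz0, mul_nonneg hLσ0 hLz0,
      mul_nonneg (mul_nonneg hL30 hLσ0) hLz0]
  set C := (1 + Real.log 3) * (1 + Real.log (1 + σ)) with hC_def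
  have hCpos : 0 < C := by positivity
  have hQP : (1 + Ly) ^ (1 + γ) ≤ C ^ (1 + γ) * (1 + Lz) ^ (1 + γ) := by
    calc (1 + Ly) ^ (1 + γ) ≤ (C * (1 + Lz)) ^ (1 + γ) :=
          Real.rpow_le_rpow (by linarith) hB hexp
    _ = C ^ (1 + γ) * (1 + Lz) ^ (1 + γ) :=
          Real.mul_rpow (le_of_lt hCpos) (by linarith)
  -- positivity of rpow terms
  have hPz : (0:ℝ) < (1 + Lz) ^ (1 + γ) := Real.rpow_pos_of_pos (by linarith) _
  have hPy : (0:ℝ) < (1 + Ly) ^ (1 + γ) := Real.rpow_pos_of_pos (by linarith) _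
  -- rewrite LHS
  have hLHS : (f ((y - μ) / σ) / σ) / f y
      = ((1 + a) * (1 + Ly) ^ (1 + γ)) / (σ * (1 + b) * (1 + Lz) ^ (1 + γ)) := by
    rw [hf, hf, ← hb_def, ← ha_def, ← hLy_def, ← hLz_def]
    have h1b : (0:ℝ) < 1 + b := by linarith
    have h1a : (0:ℝ) < 1 + a := by linarith
    field_simp
  rw [hLHS]
  have hCr : C ^ (1 + γ) = (1 + Real.log 3) ^ (1 + γ) * (1 + Real.log (1 + σ)) ^ (1 + γ) :=
    Real.mul_rpow (by linarith) (by linarith)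
  rw [div_le_iff₀ (by positivity)]
  calc (1 + a) * (1 + Ly) ^ (1 + γ)
      ≤ (4 * (σ * (1 + b))) * (C ^ (1 + γ) * (1 + Lz) ^ (1 + γ)) :=
        mul_le_mul hA hQP (le_of_lt hPy) (by positivity)
    _ = 4 * C ^ (1 + γ) * (σ * (1 + b) * (1 + Lz) ^ (1 + γ)) := by ring
    _ = 4 * (1 + Real.log 3) ^ (1 + γ) * (1 + Real.log (1 + σ)) ^ (1 + γ)
        * (σ * (1 + b) * (1 + Lz) ^ (1 + γ)) := by rw [hCr]; ring
end

section
/- Let m, p ∈ ℕ with m ≥ p, let w_1, …, w_m ∈ ℝ, and let z_1, …, z_m ∈ ℝ^p be vectors such that every set of p distinct vectors among z_1, …, z_m is linearly independent. Then there exist R > 0 and δ > 0 such that for all β ∈ ℝ^p with ‖β‖ ≥ R, the product ∏_{i=1}^m 1/(1 + |w_i − ⟨z_i, β⟩|) is at most 1/(1 + δ‖β‖)^{m − p + 1}. -/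
/-!
If `p` of the vectors `z i` span `ℝ^p`, then by finite-dimensionality the injective map
`β ↦ (⟪z i, β⟫)_i` is bounded below, so one of these `p` inner products has size at least
`c ‖β‖`. Shrinking `c` to serve all of the finitely many `p`-subsets at once, fewer than `p`
indices can have `|⟪z i, β⟫| < c ‖β‖`. For each of the remaining `m - p + 1` indices, once
`c ‖β‖ ≥ 2 |w i|` the factor is at most `1 / (1 + c ‖β‖ / 2)`; all other factors
are at most `1`.
-/

open Finset

theorem exists_pos_forall_exists_mul_norm_le_abs_inner {ι E : Type*} [Fintype ι]
    [NormedAddCommGroup E] [InnerProductSpace ℝ E] [FiniteDimensional ℝ E] {v : ι → E}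
    (hv : Submodule.span ℝ (Set.range v) = ⊤) :
    ∃ c > 0, ∀ u ≠ 0, ∃ i, c * ‖u‖ ≤ |inner ℝ (v i) u| := by
  let f : E →ₗ[ℝ] ι → ℝ := LinearMap.pi fun i => innerₛₗ ℝ (v i)
  have hker : LinearMap.ker f = ⊥ := by
    refine LinearMap.ker_eq_bot'.2 fun u hu => ?_
    have hperp : Submodule.span ℝ (Set.range v) ≤ (ℝ ∙ u)ᗮ :=
      Submodule.span_le.2 <| Set.range_subset_iff.2 fun i =>
        Submodule.mem_orthogonal_singleton_iff_inner_left.2 (congrFun hu i)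
    have hu : u ∈ (ℝ ∙ u)ᗮ := hperp (hv ▸ Submodule.mem_top)
    exact inner_self_eq_zero.1 (Submodule.mem_orthogonal_singleton_iff_inner_left.1 hu)
  obtain ⟨K, -, hK⟩ := f.exists_antilipschitzWith hker
  obtain ⟨c, hc, hcf⟩ := antilipschitzWith_iff_exists_mul_le_norm.1 ⟨K, hK⟩
  refine ⟨c, hc, fun u hu => ?_⟩
  by_contra! hlt
  have : ‖f u‖ < c * ‖u‖ := (pi_norm_lt_iff (by positivity)).2 hlt
  exact (hcf u).not_gt this

theorem Finset.sub_add_one_le_card_of_forall_card_eq_exists_mem {ι : Type*} [Fintype ι]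
    [DecidableEq ι] {p : ℕ} (hp : p ≤ Fintype.card ι) {t : Finset ι}
    (ht : ∀ s : Finset ι, #s = p → ∃ i ∈ s, i ∈ t) : Fintype.card ι - p + 1 ≤ #t := by
  have hcompl : #tᶜ < p := by
    by_contra! h
    obtain ⟨s, hs, hsp⟩ := exists_subset_card_eq h
    obtain ⟨i, hi, hit⟩ := ht s hsp
    exact mem_compl.1 (hs hi) hit
  have := card_add_card_compl t
  omega

theorem one_div_one_add_abs_sub_le {a b x : ℝ} (ha : 2 * |a| ≤ x) (hb : x ≤ |b|) :
    1 / (1 + |a - b|) ≤ 1 / (1 + x / 2) := by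
  have : x / 2 ≤ |a - b| := by
    have := abs_sub_abs_le_abs_sub b a
    rw [abs_sub_comm] at this
    linarith
  gcongr
  linarith [abs_nonneg a]

theorem Finset.prod_le_pow_card_of_le_one {ι : Type*} [Fintype ι] {f : ι → ℝ} {q : ℝ}
    {t : Finset ι} (h0 : ∀ i, 0 ≤ f i) (h1 : ∀ i, f i ≤ 1) (ht : ∀ i ∈ t, f i ≤ q) :
    ∏ i, f i ≤ q ^ #t := by
  classical
  rw [← prod_mul_prod_compl t]
  calc (∏ i ∈ t, f i) * ∏ i ∈ tᶜ, f i ≤ (∏ i ∈ t, f i) * 1 := by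
        gcongr
        · exact prod_nonneg fun i _ => h0 i
        · exact prod_le_one (fun i _ => h0 i) fun i _ => h1 i
    _ ≤ q ^ #t := by
        rw [mul_one, ← prod_const]
        exact prod_le_prod (fun i _ => h0 i) ht

open Filter Topology Module in
theorem exists_pos_card_sub_finrank_add_one_le_card_filter {ι E : Type*} [Fintype ι]
    [DecidableEq ι] [NormedAddCommGroup E] [InnerProductSpace ℝ E] [FiniteDimensional ℝ E]
    {z : ι → E} (hd : finrank ℝ E ≤ Fintype.card ι)
    (hz : ∀ s : Finset ι, #s = finrank ℝ E → LinearIndependent ℝ (fun i : s => z i)) :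
    ∃ c > 0, ∀ β ≠ 0,
      Fintype.card ι - finrank ℝ E + 1 ≤ #{i | c * ‖β‖ ≤ |inner ℝ (z i) β|} := by
  -- A constant that works for one `s` also works for all smaller ones, so finitely many
  -- of these conditions hold simultaneously for all small enough `c > 0`.
  have hloc : ∀ s : Finset ι, ∀ᶠ c in 𝓝[>] (0 : ℝ),
      #s = finrank ℝ E → ∀ β ≠ 0, ∃ i ∈ s, c * ‖β‖ ≤ |inner ℝ (z i) β| := by
    intro s
    by_cases hs : #s = finrank ℝ E
    · obtain ⟨c, hc, hcs⟩ := exists_pos_forall_exists_mul_norm_le_abs_inner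
        ((hz s hs).span_eq_top_of_card_eq_finrank' (by simp [hs]))
      filter_upwards [Ioc_mem_nhdsGT hc] with c' hc' _ β hβ
      obtain ⟨⟨i, hi⟩, hle⟩ := hcs β hβ
      exact ⟨i, hi, le_trans (by gcongr; exact hc'.2) hle⟩
    · exact Eventually.of_forall fun _ h => absurd h hs
  obtain ⟨c, hc, hcpos⟩ := ((eventually_all.2 hloc).and self_mem_nhdsWithin).exists
  refine ⟨c, hcpos, fun β hβ =>
    sub_add_one_le_card_of_forall_card_eq_exists_mem hd fun s hs => ?_⟩
  obtain ⟨i, hi, hle⟩ := hc s hs β hβ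
  exact ⟨i, hi, mem_filter.2 ⟨mem_univ i, hle⟩⟩

theorem product_linear_decay (m p : ℕ) (hmp : p ≤ m) (w : Fin m → ℝ)
    (z : Fin m → EuclideanSpace ℝ (Fin p))
    (hz : ∀ s : Finset (Fin m), s.card = p → LinearIndependent ℝ (fun i : s => z i)) :
    ∃ R > (0 : ℝ), ∃ δ > (0 : ℝ), ∀ β : EuclideanSpace ℝ (Fin p), R ≤ ‖β‖ →
      (∏ i : Fin m, 1 / (1 + |w i - (inner ℝ (z i) β : ℝ)|))
        ≤ 1 / (1 + δ * ‖β‖) ^ (m - p + 1) := by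
  obtain ⟨c, hc, hcard⟩ := exists_pos_card_sub_finrank_add_one_le_card_filter (z := z)
    (by simpa using hmp) (by simpa using hz)
  set W := ∑ i, |w i|
  have hW : 0 ≤ W := sum_nonneg fun i _ => abs_nonneg (w i)
  refine ⟨(2 * W + 1) / c, by positivity, c / 2, by positivity, fun β hβ => ?_⟩
  have hβW : 2 * W < c * ‖β‖ := by
    rw [div_le_iff₀ hc] at hβ
    linarith
  have hβ0 : β ≠ 0 := norm_ne_zero_iff.1 fun h => by
    rw [h, mul_zero] at hβW
    linarith
  set q := 1 / (1 + c / 2 * ‖β‖)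
  set t : Finset (Fin m) := {i | c * ‖β‖ ≤ |inner ℝ (z i) β|}
  have hq : q ≤ 1 := div_le_one_of_le₀ (le_add_of_nonneg_right (by positivity)) (by positivity)
  have hfactor : ∀ i ∈ t, 1 / (1 + |w i - inner ℝ (z i) β|) ≤ q := by
    intro i hi
    have hwi : 2 * |w i| ≤ c * ‖β‖ := by
      have := single_le_sum (fun j _ => abs_nonneg (w j)) (mem_univ i)
      linarith
    simpa [q, mul_div_right_comm] using one_div_one_add_abs_sub_le hwi (mem_filter.1 hi).2
  calc (∏ i, 1 / (1 + |w i - inner ℝ (z i) β|))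
      ≤ q ^ #t := prod_le_pow_card_of_le_one (fun i => by positivity)
        (fun i => div_le_one_of_le₀ (le_add_of_nonneg_right (abs_nonneg _)) (by positivity))
        hfactor
    _ ≤ q ^ (m - p + 1) := pow_le_pow_of_le_one (by positivity) hq (by simpa using hcard β hβ0)
    _ = 1 / (1 + c / 2 * ‖β‖) ^ (m - p + 1) := one_div_pow _ _
end

section
/- Let m ≥ p + 1, let z_1, …, z_m ∈ ℝ^p, and let (a_1, b_1), …, (a_m, b_m) ∈ ℝ^2 satisfy: (i) for any p distinct indices i_1, …, i_p, the matrix with rows z_{i_1}^⊤, …, z_{i_p}^⊤ is invertible; (ii) for any p+1 distinct indices i_1, …, i_{p+1}, the (p+1)×(p+1) matrix whose rows are (z_{i_j}^⊤, a_{i_j}) is invertible; (iii) for any p+1 distinct indices i_1, …, i_{p+1}, the (p+1)×(p+1) matrix whose rows are (z_{i_j}^⊤, b_{i_j}) is invertible unless b_{i_1} = ⋯ = b_{i_{p+1}} = 0. Then there exist ε > 0 and M > 0 such that for all ω ≥ M, ℝ^p is covered by the union over all p-tuples (i_1, …, i_p) ∈ {1,…,m}^p of the sets ⋂_{i ∈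 {1,…,m} \ {i_1,…,i_p}} { β ∈ ℝ^p : |a_i + b_i ω − ⟨z_i, β⟩| > ε }. -/
/-!
Call `r_i(ω, β) = a_i + b_i ω - ⟨z_i, β⟩` the `i`-th residual. It suffices that no `p + 1`
residuals can be simultaneously small. If `|r_i| ≤ ε ≤ 1` for `p + 1` indices, the vector
`(β, -ω)` is sent by the invertible matrix with rows `(z_iᵀ, b_i)` to `a_i - r_i`, which is
bounded, so `ω` is bounded; when all these `b_i` vanish, the invertible matrix with rows
`(z_iᵀ, a_i)` sends `(β, -1)` to `-r_i`, so `ε` is bounded below. Finitely many choices of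
indices give a uniform `ε` and `M`, and then the at most `p` small residuals are covered by a
single `p`-tuple.
-/

open Filter Topology Matrix

def augmentedMatrix {ι : Type*} {p : ℕ} (z : ι → EuclideanSpace ℝ (Fin p)) (c : ι → ℝ) :
    Matrix ι (Fin (p + 1)) ℝ :=
  Matrix.of fun j k => Fin.lastCases (c j) (fun k' => z j k') k

lemma augmentedMatrix_mulVec_snoc {ι : Type*} {p : ℕ} (z : ι → EuclideanSpace ℝ (Fin p))
    (c : ι → ℝ) (β : EuclideanSpace ℝ (Fin p)) (t : ℝ) :
    augmentedMatrix z c *ᵥ Fin.snoc (fun k => β k) t = fun j => inner ℝ (z j) β + c j * t := by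
  ext j
  simp only [augmentedMatrix, mulVec, dotProduct, of_apply, Fin.sum_univ_castSucc,
    Fin.lastCases_castSucc, Fin.lastCases_last, Fin.snoc_castSucc, Fin.snoc_last,
    PiLp.inner_apply, RCLike.inner_apply, conj_trivial]
  simp only [mul_comm (β _)]

lemma Matrix.exists_norm_le_mul_norm_mulVec {n : Type*} [Fintype n] [DecidableEq n]
    {N : Matrix n n ℝ} (hN : IsUnit N) : ∃ C > 0, ∀ y : n → ℝ, ‖y‖ ≤ C * ‖N *ᵥ y‖ := by
  obtain ⟨C, hC, hbound⟩ := (LinearMap.toContinuousLinearMap (toLin' N⁻¹)).bound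
  refine ⟨C, hC, fun y => ?_⟩
  have hy : N⁻¹ *ᵥ (N *ᵥ y) = y := by
    rw [mulVec_mulVec, nonsing_inv_mul _ ((isUnit_iff_isUnit_det N).mp hN), one_mulVec]
  simpa [hy] using hbound (N *ᵥ y)

lemma exists_bound_of_isUnit_augmentedMatrix {p : ℕ} {z : Fin (p + 1) → EuclideanSpace ℝ (Fin p)}
    (a : Fin (p + 1) → ℝ) {b : Fin (p + 1) → ℝ} (hb : IsUnit (augmentedMatrix z b)) :
    ∃ M, ∀ (ω : ℝ) (β : EuclideanSpace ℝ (Fin p)),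
      (∀ j, |a j + b j * ω - inner ℝ (z j) β| ≤ 1) → ω ≤ M := by
  obtain ⟨C, hC0, hC⟩ := exists_norm_le_mul_norm_mulVec hb
  refine ⟨C * (‖a‖ + 1), fun ω β hr => ?_⟩
  have himage : ‖augmentedMatrix z b *ᵥ Fin.snoc (fun k => β k) (-ω)‖ ≤ ‖a‖ + 1 := by
    refine (pi_norm_le_iff_of_nonneg (by positivity)).2 fun j => ?_
    rw [augmentedMatrix_mulVec_snoc, Real.norm_eq_abs]
    calc |inner ℝ (z j) β + b j * -ω| = |a j - (a j + b j * ω - inner ℝ (z j) β)| := by ring_nf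
      _ ≤ |a j| + |a j + b j * ω - inner ℝ (z j) β| := abs_sub _ _
      _ ≤ ‖a‖ + 1 := add_le_add (norm_le_pi_norm a j) (hr j)
  calc ω ≤ ‖(Fin.snoc (fun k => β k) (-ω) : Fin (p + 1) → ℝ) (Fin.last p)‖ := by
        simp [le_abs_self]
    _ ≤ ‖(Fin.snoc (fun k => β k) (-ω) : Fin (p + 1) → ℝ)‖ := norm_le_pi_norm _ _
    _ ≤ C * (‖a‖ + 1) := (hC _).trans (by gcongr)

lemma exists_pos_lt_abs_of_isUnit_augmentedMatrix {p : ℕ}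
    {z : Fin (p + 1) → EuclideanSpace ℝ (Fin p)} {a : Fin (p + 1) → ℝ}
    (ha : IsUnit (augmentedMatrix z a)) :
    ∃ ε > 0, ∀ β : EuclideanSpace ℝ (Fin p), ∃ j, ε < |a j - inner ℝ (z j) β| := by
  obtain ⟨C, hC0, hC⟩ := exists_norm_le_mul_norm_mulVec ha
  refine ⟨1 / (2 * C), by positivity, fun β => ?_⟩
  by_contra! hr
  have himage : ‖augmentedMatrix z a *ᵥ Fin.snoc (fun k => β k) (-1)‖ ≤ 1 / (2 * C) := by
    refine (pi_norm_le_iff_of_nonneg (by positivity)).2 fun j => ?_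
    rw [augmentedMatrix_mulVec_snoc, Real.norm_eq_abs, ← abs_neg]
    exact le_of_eq_of_le (by ring_nf) (hr j)
  have : (1 : ℝ) ≤ C * (1 / (2 * C)) :=
    calc (1 : ℝ) = ‖(Fin.snoc (fun k => β k) (-1) : Fin (p + 1) → ℝ) (Fin.last p)‖ := by simp
      _ ≤ ‖(Fin.snoc (fun k => β k) (-1) : Fin (p + 1) → ℝ)‖ := norm_le_pi_norm _ _
      _ ≤ C * (1 / (2 * C)) := (hC _).trans (by gcongr)
  field_simp at this
  linarith

lemma eventually_exists_lt_abs_residual {p : ℕ} {z : Fin (p + 1) → EuclideanSpace ℝ (Fin p)}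
    {a b : Fin (p + 1) → ℝ} (ha : IsUnit (augmentedMatrix z a))
    (hb : (∃ j, b j ≠ 0) → IsUnit (augmentedMatrix z b)) :
    ∀ᶠ ε in 𝓝[>] 0, ∀ᶠ ω in atTop, ∀ β : EuclideanSpace ℝ (Fin p),
      ∃ j, ε < |a j + b j * ω - inner ℝ (z j) β| := by
  by_cases hb0 : ∃ j, b j ≠ 0
  · obtain ⟨M, hM⟩ := exists_bound_of_isUnit_augmentedMatrix a (hb hb0)
    filter_upwards [nhdsWithin_le_nhds (eventually_lt_nhds zero_lt_one)] with ε hε1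
    filter_upwards [eventually_gt_atTop M] with ω hω β
    by_contra! hsmall
    exact hω.not_ge (hM ω β fun j => (hsmall j).trans hε1.le)
  · push Not at hb0
    obtain ⟨ε₀, hε₀, hsep⟩ := exists_pos_lt_abs_of_isUnit_augmentedMatrix ha
    filter_upwards [nhdsWithin_le_nhds (eventually_lt_nhds hε₀)] with ε hε
    refine Eventually.of_forall fun ω β => ?_
    obtain ⟨j, hj⟩ := hsep β
    exact ⟨j, by simpa [hb0 j] using hε.trans hj⟩

lemma exists_fin_subset_range_of_forall_injective {α : Type*} [Nonempty α] {p : ℕ} (s : Set α)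
    [Finite s] (hs : ∀ ι : Fin (p + 1) → α, Function.Injective ι → ∃ j, ι j ∉ s) :
    ∃ κ : Fin p → α, s ⊆ Set.range κ := by
  cases nonempty_fintype s
  have hcard : Fintype.card s ≤ p := by
    by_contra! hlt
    obtain ⟨e⟩ := Function.Embedding.nonempty_of_card_le (α := Fin (p + 1)) (β := s)
      (by simpa using hlt)
    obtain ⟨j, hj⟩ := hs (fun j => e j) (Subtype.val_injective.comp e.injective)
    exact hj (e j).2
  obtain ⟨e⟩ := Function.Embedding.nonempty_of_card_le (α := s) (β := Fin p) (by simpa using hcard)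
  refine ⟨Function.extend e Subtype.val fun _ => Classical.arbitrary α, fun i hi => ?_⟩
  exact ⟨e ⟨i, hi⟩, e.injective.extend_apply _ _ _⟩

theorem covering_lemma_general (m p : ℕ) (hmp : p + 1 ≤ m)
    (z : Fin m → EuclideanSpace ℝ (Fin p)) (a b : Fin m → ℝ)
    (h2 : ∀ ι : Fin (p + 1) → Fin m, Function.Injective ι →
      IsUnit (Matrix.of fun j k =>
        Fin.lastCases (a (ι j)) (fun k' => z (ι j) k') k :
          Matrix (Fin (p + 1)) (Fin (p + 1)) ℝ))
    (h3 : ∀ ι : Fin (p + 1) → Fin m, Function.Injective ι → (∃ j, b (ι j) ≠ 0) →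
      IsUnit (Matrix.of fun j k =>
        Fin.lastCases (b (ι j)) (fun k' => z (ι j) k') k :
          Matrix (Fin (p + 1)) (Fin (p + 1)) ℝ)) :
    ∃ ε > (0 : ℝ), ∃ M > (0 : ℝ), ∀ ω ≥ M, ∀ β : EuclideanSpace ℝ (Fin p),
      ∃ ι : Fin p → Fin m, ∀ i : Fin m, (∀ j, ι j ≠ i) →
        ε < |a i + b i * ω - (inner ℝ (z i) β : ℝ)| := by
  have hlocal : ∀ ι : Fin (p + 1) → Fin m, Function.Injective ι →
      ∀ᶠ ε in 𝓝[>] 0, ∀ᶠ ω in atTop, ∀ β : EuclideanSpace ℝ (Fin p),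
        ∃ j, ε < |a (ι j) + b (ι j) * ω - inner ℝ (z (ι j)) β| := fun ι hι =>
    eventually_exists_lt_abs_residual (z := z ∘ ι) (h2 ι hι) (h3 ι hι)
  have huniform : ∀ᶠ ε in 𝓝[>] 0, ∀ᶠ ω in atTop, ∀ ι : Fin (p + 1) → Fin m,
      Function.Injective ι → ∀ β : EuclideanSpace ℝ (Fin p),
        ∃ j, ε < |a (ι j) + b (ι j) * ω - inner ℝ (z (ι j)) β| := by
    filter_upwards [eventually_all.2 fun ι => eventually_imp_distrib_left.2 (hlocal ι)] with ε hε
    exact eventually_all.2 fun ι => eventually_imp_distrib_left.2 (hε ι)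
  obtain ⟨ε, hε, hε0⟩ := (huniform.and self_mem_nhdsWithin).exists
  obtain ⟨M, hM⟩ := eventually_atTop.1 hε
  refine ⟨ε, hε0, max M 1, by positivity, fun ω hω β => ?_⟩
  have : Nonempty (Fin m) := ⟨⟨0, by omega⟩⟩
  obtain ⟨κ, hκ⟩ := exists_fin_subset_range_of_forall_injective
    {i | |a i + b i * ω - inner ℝ (z i) β| ≤ ε} fun ι hι => by
      simpa using hM ω (le_of_max_le_left hω) ι hι β
  refine ⟨κ, fun i hi => lt_of_not_ge fun hsmall => ?_⟩
  obtain ⟨j, hj⟩ := hκ hsmall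
  exact hi j hj

theorem covering_lemma (m p : ℕ) (hmp : p + 1 ≤ m)
    (z : Fin m → EuclideanSpace ℝ (Fin p)) (a b : Fin m → ℝ)
    (h1 : ∀ ι : Fin p → Fin m, Function.Injective ι →
      IsUnit (Matrix.of fun j k => z (ι j) k : Matrix (Fin p) (Fin p) ℝ))
    (h2 : ∀ ι : Fin (p + 1) → Fin m, Function.Injective ι →
      IsUnit (Matrix.of fun j k =>
        Fin.lastCases (a (ι j)) (fun k' => z (ι j) k') k :
          Matrix (Fin (p + 1)) (Fin (p + 1)) ℝ))
    (h3 : ∀ ι : Fin (p + 1) → Fin m, Function.Injective ι → (∃ j, b (ι j) ≠ 0) →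
      IsUnit (Matrix.of fun j k =>
        Fin.lastCases (b (ι j)) (fun k' => z (ι j) k') k :
          Matrix (Fin (p + 1)) (Fin (p + 1)) ℝ)) :
    ∃ ε > (0 : ℝ), ∃ M > (0 : ℝ), ∀ ω ≥ M, ∀ β : EuclideanSpace ℝ (Fin p),
      ∃ ι : Fin p → Fin m, ∀ i : Fin m, (∀ j, ι j ≠ i) →
        ε < |a i + b i * ω - (inner ℝ (z i) β : ℝ)| :=
  covering_lemma_general m p hmp z a b h2 h3
end

section
/- If ν > 0, p ∈ ℕ, and p(β) = C_ν (1 + ‖β‖²/ν)^{-(ν+p)/2} is the standard multivariate t-density on ℝ^p with ν degrees of freedom (C_ν = Γ((ν+p)/2)/(Γ(ν/2) ν^{p/2} π^{p/2})), then there exists M > 0 such that for all β = (β_1, …, β_p) ∈ ℝ^p, p(β) ≤ M ∏_{k=1}^p (1 + |β_k|)^{-(1 + ν/p)}. -/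
/-!
Since `|β k| ≤ ‖β‖`, the product is at least `(1 + ‖β‖) ^ (-(p + ν))`, while
`(1 + x)² ≤ 2 max(1, ν) (1 + x² / ν)` bounds the density by a constant times that same power.
-/

open Real

lemma one_add_sq_le_mul_one_add_sq_div {ν : ℝ} (hν : 0 < ν) (x : ℝ) :
    (1 + x) ^ 2 ≤ 2 * max 1 ν * (1 + x ^ 2 / ν) := by
  have h1 : 1 ≤ max 1 ν := le_max_left 1 ν
  have hx : max 1 ν * (x ^ 2 / ν) ≥ x ^ 2 := by
    rw [mul_div_assoc', ge_iff_le, le_div_iff₀ hν]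
    nlinarith [le_max_right 1 ν, sq_nonneg x]
  nlinarith [sq_nonneg (1 - x)]

lemma one_add_sq_div_rpow_neg_le {ν x : ℝ} (hν : 0 < ν) (hx : 0 ≤ x) {s : ℝ} (hs : 0 ≤ s) :
    (1 + x ^ 2 / ν) ^ (-s) ≤ (2 * max 1 ν) ^ s * (1 + x) ^ (-(2 * s)) := by
  have hK : 0 < 2 * max 1 ν := by positivity
  calc (1 + x ^ 2 / ν) ^ (-s) ≤ ((1 + x) ^ 2 / (2 * max 1 ν)) ^ (-s) :=
        rpow_le_rpow_of_nonpos (by positivity)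
          ((div_le_iff₀' hK).2 (one_add_sq_le_mul_one_add_sq_div hν x)) (by linarith)
    _ = (2 * max 1 ν) ^ s * (1 + x) ^ (-(2 * s)) := by
        rw [div_rpow (by positivity) hK.le, rpow_neg hK.le, div_inv_eq_mul, mul_comm,
          ← rpow_natCast, ← rpow_mul (by positivity), Nat.cast_ofNat, mul_neg]

lemma one_add_norm_rpow_neg_le_prod {ι : Type*} [Fintype ι] (β : EuclideanSpace ℝ ι)
    {t : ℝ} (ht : 0 ≤ t) :
    (1 + ‖β‖) ^ (-(Fintype.card ι * t)) ≤ ∏ k, (1 + |β k|) ^ (-t) := by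
  calc (1 + ‖β‖) ^ (-(Fintype.card ι * t)) = ∏ _k : ι, (1 + ‖β‖) ^ (-t) := by
        rw [Finset.prod_const, Finset.card_univ, ← rpow_mul_natCast (by positivity)]
        ring_nf
    _ ≤ ∏ k, (1 + |β k|) ^ (-t) := by
        refine Finset.prod_le_prod (fun _ _ => by positivity) fun k _ => ?_
        exact rpow_le_rpow_of_nonpos (by positivity)
          (by simpa using PiLp.norm_apply_le β k) (by linarith)

-- For `p = 0` the left side is `0`, as `ν / 0 = 0` in Lean.
lemma natCast_mul_one_add_div_le {ν : ℝ} (hν : 0 ≤ ν) (p : ℕ) : p * (1 + ν / p) ≤ p + ν := by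
  rcases eq_or_ne p 0 with rfl | hp
  · simpa using hν
  · rw [mul_add, mul_one, mul_div_cancel₀ ν (by exact_mod_cast hp)]

theorem multivariate_t_density_bound (ν : ℝ) (hν : 0 < ν) (p : ℕ) :
    ∃ M > (0 : ℝ), ∀ β : EuclideanSpace ℝ (Fin p),
      (Real.Gamma ((ν + p) / 2) /
          (Real.Gamma (ν / 2) * ν ^ ((p : ℝ) / 2) * Real.pi ^ ((p : ℝ) / 2)))
          * (1 + ‖β‖ ^ 2 / ν) ^ (-(ν + p) / 2)
        ≤ M * ∏ k : Fin p, (1 + |β k|) ^ (-(1 + ν / (p : ℝ))) := by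
  set C := Real.Gamma ((ν + p) / 2) /
    (Real.Gamma (ν / 2) * ν ^ ((p : ℝ) / 2) * Real.pi ^ ((p : ℝ) / 2))
  have hC : 0 < C := by
    have hΓν := Gamma_pos_of_pos (half_pos hν)
    have hΓνp := Gamma_pos_of_pos (by positivity : 0 < (ν + p) / 2)
    positivity
  set s := (ν + p) / 2
  refine ⟨C * (2 * max 1 ν) ^ s, by positivity, fun β => ?_⟩
  have hexp : (p : ℝ) * (1 + ν / p) ≤ 2 * s := by
    linarith [natCast_mul_one_add_div_le hν.le p, show 2 * s = ν + p by ring]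
  calc C * (1 + ‖β‖ ^ 2 / ν) ^ (-(ν + p) / 2)
      ≤ C * ((2 * max 1 ν) ^ s * (1 + ‖β‖) ^ (-(2 * s))) := by
        rw [neg_div]
        gcongr
        exact one_add_sq_div_rpow_neg_le hν (norm_nonneg β) (by positivity)
    _ ≤ C * ((2 * max 1 ν) ^ s * (1 + ‖β‖) ^ (-(p * (1 + ν / p)))) := by
        gcongr
        exact le_add_of_nonneg_right (norm_nonneg β)
    _ ≤ C * (2 * max 1 ν) ^ s * ∏ k : Fin p, (1 + |β k|) ^ (-(1 + ν / (p : ℝ))) := by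
        rw [← mul_assoc]
        gcongr
        simpa using one_add_norm_rpow_neg_le_prod β (t := 1 + ν / p) (by positivity)
end
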